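/- Let (A, Ã) be a dual pair of closed densely defined operators on a complex Hilbert space H with the common core property (common core D), with A dissipative, and let V := ((A − Ã)/(2i))↾_D be its imaginary part. Let W_F = V_F^{1/2} and W_K = V_K^{1/2} be the square roots of the Friedrichs and Kreĭn–von Neumann extensions of V. Let 𝒱 ⊆ D(Ã*) with 𝒱 ∩ D(A) = {0} and L : 𝒱 → H linear, and assume 𝒱 ⊆ D(W_K). If the extension A_{𝒱,L} (domain D(A) ∔ 𝒱, acting as f + v ↦ Ã*(f+v) + Lv) is dissipative, then Lv ∈ ran(W_F) for every v ∈ 𝒱. -/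

import Mathlib

/-!
Fix `v ∈ 𝓥` and `x ∈ D(V)`. Dissipativity of `A_{𝓥,L}` at `μ x + v` says that a quadratic
polynomial in `μ ∈ ℂ` is nonnegative; its leading coefficient is `Im ⟪x, A x⟫ = ‖W_F x‖²` and
its linear part involves `⟪x, L v⟫` and `⟪v, V x⟫`. The Ando–Nishio description of `W_K` gives
`|⟪v, V x⟫|² ≤ ‖W_K v‖² ‖W_F x‖²`, so the discriminant yields `|⟪L v, x⟫| ≤ C ‖W_F x‖`. Since
`D(V)` is a core for `W_F`, this bound holds on all of `D(W_F)`; then `W_F x ↦ ⟪L v, x⟫` is a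
bounded functional, represented by Riesz as `⟪u, W_F x⟫`, i.e. `W_F u = W_F* u = L v`.
-/

noncomputable section

open Complex

variable {H : Type*} [NormedAddCommGroup H] [InnerProductSpace ℂ H] [CompleteSpace H]

local notation "⟪" x ", " y "⟫" => @inner ℂ _ _ x y

/-- A partially defined operator is *dissipative* if `Im ⟪ψ, A ψ⟫ ≥ 0` for all `ψ` in its
domain. -/
def Dissipative (A : H →ₗ.[ℂ] H) : Prop :=
  ∀ ψ : A.domain, 0 ≤ (⟪(ψ : H), A ψ⟫).im

/-- A partially defined operator is *symmetric* if `⟪f, S g⟫ = ⟪S f, g⟫` on its domain. -/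
def IsSymmetricP (S : H →ₗ.[ℂ] H) : Prop :=
  ∀ f g : S.domain, ⟪(f : H), S g⟫ = ⟪S f, (g : H)⟫

/-- A partially defined operator is *non-negative* if `⟪f, V f⟫` is real and `≥ 0` on its
domain. -/
def NonnegP (V : H →ₗ.[ℂ] H) : Prop :=
  ∀ f : V.domain, (⟪(f : H), V f⟫).im = 0 ∧ 0 ≤ (⟪(f : H), V f⟫).re

/-- `T = W ∘ W` as partially defined operators: the domain of `T` is
`{x ∈ D(W) : W x ∈ D(W)}` and there `T x = W (W x)`. -/
def IsSqrtOf (W T : H →ₗ.[ℂ] H) : Prop :=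
  (∀ x : H, x ∈ T.domain ↔ ∃ hx : x ∈ W.domain, W ⟨x, hx⟩ ∈ W.domain) ∧
  ∀ (x : H) (hxT : x ∈ T.domain) (hxW : x ∈ W.domain) (hWx : W ⟨x, hxW⟩ ∈ W.domain),
    T ⟨x, hxT⟩ = W ⟨W ⟨x, hxW⟩, hWx⟩

/-- The Ando–Nishio supremum `sup { |⟪h, V f⟫|² / ⟪f, V f⟫ : f ∈ D(V), V f ≠ 0 }`,
computed in `[0, ∞]`. -/
def anSup (V : H →ₗ.[ℂ] H) (h : H) : ENNReal :=
  ⨆ f : {f : V.domain // V f ≠ 0},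
    ENNReal.ofReal (‖⟪h, V f.1⟫‖ ^ 2) / ENNReal.ofReal ((⟪(f.1 : H), V f.1⟫).re)

/-- `W` is the square root of the Friedrichs extension of `V`: `W` is a non-negative
selfadjoint operator, `W ∘ W` is a non-negative selfadjoint extension of `V`, and `D(V)` is a
core for `W`. -/
def IsFriedrichsSqrt (V W : H →ₗ.[ℂ] H) : Prop :=
  IsSelfAdjoint W ∧ NonnegP W ∧
    (∃ T : H →ₗ.[ℂ] H, IsSqrtOf W T ∧ IsSelfAdjoint T ∧ NonnegP T ∧ V ≤ T) ∧
    (W.domRestrict V.domain).closure = W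

/-- `W` is the square root of the Kreĭn–von Neumann extension of `V` (Ando–Nishio
characterization): `W` is a non-negative selfadjoint operator, `W ∘ W` is a non-negative
selfadjoint extension of `V`, the domain of `W` consists exactly of those `h` with
`anSup V h < ∞`, and `‖W h‖² = anSup V h` there. -/
def IsKreinSqrt (V W : H →ₗ.[ℂ] H) : Prop :=
  IsSelfAdjoint W ∧ NonnegP W ∧
    (∃ T : H →ₗ.[ℂ] H, IsSqrtOf W T ∧ IsSelfAdjoint T ∧ NonnegP T ∧ V ≤ T) ∧
    (∀ h : H, h ∈ W.domain ↔ anSup V h < ⊤) ∧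
    ∀ (h : H) (hh : h ∈ W.domain), ENNReal.ofReal (‖W ⟨h, hh⟩‖ ^ 2) = anSup V h

open scoped ComplexConjugate LinearPMap

lemma norm_sub_conj_sq_le_of_forall_im_nonneg {a d : ℝ} {p q : ℂ}
    (h : ∀ μ : ℂ, 0 ≤ ‖μ‖ ^ 2 * a + (conj μ * p + μ * q).im + d) :
    ‖p - conj q‖ ^ 2 ≤ 4 * a * d := by
  set s := ‖p - conj q‖ ^ 2 with hs
  -- the real direction only yields `0 ≤ a * d`, which is all we need when `p = conj q`
  have hreal : ∀ t : ℝ, 0 ≤ a * (t * t) + (p + q).im * t + d := by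
    intro t
    have := h t
    simp only [norm_real, Real.norm_eq_abs, sq_abs, conj_ofReal, ← mul_add, im_ofReal_mul] at this
    linarith
  -- along `μ = t * z` the linear term is `-t * s`, the most negative possible
  set z := I * (p - conj q)
  have hz : (conj z * p + z * q).im = -s := by
    rw [hs, ← normSq_eq_norm_sq, normSq_apply]
    simp only [z, map_mul, conj_I, map_sub, conj_conj, add_im, mul_im, mul_re, neg_re, neg_im,
      I_re, I_im, sub_re, sub_im, conj_re, conj_im]
    ring
  have hline : ∀ t : ℝ, 0 ≤ (a * s) * (t * t) + (-s) * t + d := by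
    intro t
    have := h (t * z)
    rw [map_mul, conj_ofReal, mul_assoc, mul_assoc, ← mul_add, im_ofReal_mul, hz, norm_mul,
      norm_real, Real.norm_eq_abs, mul_pow, sq_abs, norm_mul, norm_I, one_mul] at this
    linarith
  have h1 := discrim_le_zero hreal
  have h2 := discrim_le_zero hline
  rw [discrim] at h1 h2
  nlinarith [sq_nonneg (p + q).im, sq_nonneg s]

lemma norm_sq_le_of_forall_im_nonneg {a d : ℝ} {p q : ℂ}
    (h : ∀ μ : ℂ, 0 ≤ ‖μ‖ ^ 2 * a + (conj μ * p + μ * q).im + d) :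
    ‖p‖ ^ 2 ≤ 8 * a * d + 2 * ‖q‖ ^ 2 := by
  have hpq := norm_sub_conj_sq_le_of_forall_im_nonneg h
  have htri : ‖p‖ ≤ ‖p - conj q‖ + ‖q‖ := by
    simpa using norm_le_norm_sub_add p (conj q)
  nlinarith [sq_nonneg (‖p - conj q‖ - ‖q‖), norm_nonneg p]

section ClosedProperty

variable {R E F : Type*} [CommRing R] [AddCommGroup E] [AddCommGroup F] [Module R E] [Module R F]
  [TopologicalSpace E] [TopologicalSpace F] [ContinuousAdd E] [ContinuousAdd F]
  [TopologicalSpace R] [ContinuousSMul R E] [ContinuousSMul R F]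

lemma LinearPMap.closure_graph_subset {f : E →ₗ.[R] F} {s : Set (E × F)} (hs : _root_.IsClosed s)
    (hf : (f.graph : Set (E × F)) ⊆ s) : (f.closure.graph : Set (E × F)) ⊆ s := by
  by_cases hcl : f.IsClosable
  · rw [← hcl.graph_closure_eq_closure_graph, Submodule.topologicalClosure_coe]
    exact closure_minimal hf hs
  · rwa [LinearPMap.closure_def' hcl]

end ClosedProperty

omit [CompleteSpace H] in
lemma LinearPMap.norm_inner_le_of_closure_eq {S W : H →ₗ.[ℂ] H} (hSW : S.closure = W) {y : H}
    {C : ℝ} (hS : ∀ x : S.domain, ‖⟪y, (x : H)⟫‖ ≤ C * ‖S x‖) (x : W.domain) :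
    ‖⟪y, (x : H)⟫‖ ≤ C * ‖W x‖ := by
  have hs : _root_.IsClosed {p : H × H | ‖⟪y, p.1⟫‖ ≤ C * ‖p.2‖} :=
    isClosed_le (by fun_prop) (by fun_prop)
  have hgraph : (S.graph : Set (H × H)) ⊆ {p | ‖⟪y, p.1⟫‖ ≤ C * ‖p.2‖} := by
    intro p hp
    obtain ⟨x, hx₁, hx₂⟩ := S.mem_graph_iff.1 hp
    show ‖⟪y, p.1⟫‖ ≤ C * ‖p.2‖
    rw [← hx₁, ← hx₂]
    exact hS x
  subst hSW
  exact S.closure_graph_subset hs hgraph (S.closure.mem_graph x)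

lemma IsSelfAdjoint.isFormalAdjoint {W : H →ₗ.[ℂ] H} (hW : IsSelfAdjoint W) :
    W.IsFormalAdjoint W := fun x y => by
  have heq : W† = W := hW
  have hx : (x : H) ∈ W†.domain := heq.ge.1 x.2
  rw [← (heq.le.2 rfl : W† ⟨x, hx⟩ = W x)]
  exact LinearPMap.adjoint_isFormalAdjoint hW.dense_domain ⟨x, hx⟩ y

lemma LinearMap.exists_inner_eq_of_norm_le {M : Type*} [AddCommGroup M] [Module ℂ M]
    (S : M →ₗ[ℂ] H) (ψ : M →ₗ[ℂ] ℂ) (C : ℝ) (hψ : ∀ m, ‖ψ m‖ ≤ C * ‖S m‖) :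
    ∃ u : H, ∀ m, ψ m = ⟪u, S m⟫ := by
  have hker : LinearMap.ker S ≤ LinearMap.ker ψ := fun m hm => by
    simpa [LinearMap.mem_ker.1 hm] using hψ m
  let ℓ : LinearMap.range S →ₗ[ℂ] ℂ :=
    (LinearMap.ker S).liftQ ψ hker ∘ₗ S.quotKerEquivRange.symm.toLinearMap
  have hℓ : ∀ m, ℓ ⟨S m, LinearMap.mem_range_self S m⟩ = ψ m := fun m => by
    simp [ℓ, LinearMap.quotKerEquivRange_symm_apply_image]
  have hℓC : ∀ y, ‖ℓ y‖ ≤ C * ‖y‖ := by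
    rintro ⟨_, m, rfl⟩
    rw [hℓ]
    exact hψ m
  obtain ⟨G, hG, -⟩ := exists_extension_norm_eq _ (ℓ.mkContinuous C hℓC)
  refine ⟨(InnerProductSpace.toDual ℂ H).symm G, fun m => ?_⟩
  rw [InnerProductSpace.toDual_symm_apply, ← hℓ m]
  exact (hG _).symm

lemma LinearPMap.exists_adjoint_apply_eq_of_norm_inner_le {T : H →ₗ.[ℂ] H}
    (hT : Dense (T.domain : Set H)) {y : H} {C : ℝ}
    (hy : ∀ x : T.domain, ‖⟪y, (x : H)⟫‖ ≤ C * ‖T x‖) :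
    ∃ u : T†.domain, T† u = y := by
  obtain ⟨u, hu⟩ := T.toFun.exists_inner_eq_of_norm_le ((innerₛₗ ℂ y).comp T.domain.subtype) C hy
  exact ⟨⟨u, T.mem_adjoint_domain_of_exists u ⟨y, hu⟩⟩, T.adjoint_apply_eq hT _ hu⟩

lemma IsSelfAdjoint.exists_apply_eq_of_norm_inner_le {W : H →ₗ.[ℂ] H} (hW : IsSelfAdjoint W)
    {y : H} {C : ℝ} (hy : ∀ x : W.domain, ‖⟪y, (x : H)⟫‖ ≤ C * ‖W x‖) :
    ∃ (g : H) (hg : g ∈ W.domain), W ⟨g, hg⟩ = y := by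
  have heq : W† = W := hW
  obtain ⟨u, hu⟩ := W.exists_adjoint_apply_eq_of_norm_inner_le hW.dense_domain hy
  exact ⟨u, heq.le.1 u.2, hu ▸ (heq.le.2 rfl).symm⟩

lemma IsSqrtOf.inner_map_eq_norm_sq {W T : H →ₗ.[ℂ] H} (hWT : IsSqrtOf W T)
    (hW : IsSelfAdjoint W) (x : T.domain) (hxW : (x : H) ∈ W.domain) :
    ⟪(x : H), T x⟫ = ((‖W ⟨x, hxW⟩‖ ^ 2 : ℝ) : ℂ) := by
  obtain ⟨_, hWx⟩ := (hWT.1 x).1 x.2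
  rw [hWT.2 x x.2 hxW hWx, ← hW.isFormalAdjoint ⟨x, hxW⟩ ⟨_, hWx⟩, inner_self_eq_norm_sq_to_K]
  norm_cast

lemma IsKreinSqrt.norm_inner_sq_le {V W : H →ₗ.[ℂ] H} (hW : IsKreinSqrt V W) (h : W.domain)
    (f : V.domain) (hf : 0 ≤ (⟪(f : H), V f⟫).re) :
    ‖⟪(h : H), V f⟫‖ ^ 2 ≤ ‖W h‖ ^ 2 * (⟪(f : H), V f⟫).re := by
  by_cases hVf : V f = 0
  · simp [hVf]
  have hle : ENNReal.ofReal (‖⟪(h : H), V f⟫‖ ^ 2) / ENNReal.ofReal (⟪(f : H), V f⟫).re ≤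
      ENNReal.ofReal (‖W h‖ ^ 2) :=
    (le_iSup (fun g : {g : V.domain // V g ≠ 0} => ENNReal.ofReal (‖⟪(h : H), V g.1⟫‖ ^ 2) /
      ENNReal.ofReal (⟪(g.1 : H), V g.1⟫).re) ⟨f, hVf⟩).trans (hW.2.2.2.2 h h.2).ge
  rw [ENNReal.div_le_iff_le_mul (Or.inr ENNReal.ofReal_ne_top) (Or.inl ENNReal.ofReal_ne_top),
    ← ENNReal.ofReal_mul (sq_nonneg _)] at hle
  exact (ENNReal.ofReal_le_ofReal_iff (by positivity)).1 hle

section DualPair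

variable {A At : H →ₗ.[ℂ] H} (hAt : Dense (At.domain : Set H)) (hdual : A ≤ At†)
  {x : H} (hxA : x ∈ A.domain) (hxAt : x ∈ At.domain)
include hAt hdual

lemma im_inner_eq_re_inner_of_sub_eq {y : H}
    (hy : A ⟨x, hxA⟩ - At ⟨x, hxAt⟩ = (2 * I) • y) :
    (⟪x, A ⟨x, hxA⟩⟫).im = (⟪x, y⟫).re := by
  have h : ⟪x, A ⟨x, hxA⟩⟫ - conj ⟪x, A ⟨x, hxA⟩⟫ = ⟪x, A ⟨x, hxA⟩ - At ⟨x, hxAt⟩⟫ := by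
    rw [inner_sub_right, inner_conj_symm, (hdual.2 rfl : A ⟨x, hxA⟩ = At† ⟨x, hdual.1 hxA⟩)]
    exact congrArg _ (LinearPMap.adjoint_isFormalAdjoint hAt _ ⟨x, hxAt⟩)
  rw [Complex.sub_conj, hy, inner_smul_right] at h
  have := congrArg Complex.im h
  simp only [mul_im, mul_re, ofReal_re, ofReal_im, I_re, I_im, re_ofNat, im_ofNat] at this
  linarith

lemma im_inner_smul_add_eq (v : At†.domain) (ℓ : H) (μ : ℂ) (hμxv : μ • x + v ∈ At†.domain) :
    (⟪μ • x + v, At† ⟨μ • x + v, hμxv⟩ + ℓ⟫).im = ‖μ‖ ^ 2 * (⟪x, A ⟨x, hxA⟩⟫).im +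
      (conj μ * ⟪x, ℓ⟫ + μ * ⟪(v : H), A ⟨x, hxA⟩ - At ⟨x, hxAt⟩⟫).im +
      (⟪(v : H), At† v + ℓ⟫).im := by
  have hsplit : At† ⟨μ • x + v, hμxv⟩ = μ • A ⟨x, hxA⟩ + At† v := by
    rw [(hdual.2 rfl : A ⟨x, hxA⟩ = At† ⟨x, hdual.1 hxA⟩), ← LinearPMap.map_smul,
      ← LinearPMap.map_add]
    rfl
  have hvA : ⟪(v : H), A ⟨x, hxA⟩⟫ =
      conj ⟪x, At† v⟫ + ⟪(v : H), A ⟨x, hxA⟩ - At ⟨x, hxAt⟩⟫ := by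
    rw [inner_sub_right, inner_conj_symm, LinearPMap.adjoint_isFormalAdjoint hAt v ⟨x, hxAt⟩]
    ring
  rw [hsplit]
  simp only [inner_add_left, inner_add_right, inner_smul_left, inner_smul_right, hvA]
  rw [← Complex.normSq_eq_norm_sq, Complex.normSq_apply]
  simp only [add_im, add_re, mul_im, mul_re, conj_re, conj_im]
  ring

lemma norm_inner_sq_le_of_dissipative_extension {y : H}
    (hy : A ⟨x, hxA⟩ - At ⟨x, hxAt⟩ = (2 * I) • y) (v : At†.domain) (ℓ : H)
    (hdiss : ∀ (f : A.domain) (hfv : (f : H) + v ∈ At†.domain),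
      0 ≤ (⟪(f : H) + v, At† ⟨(f : H) + v, hfv⟩ + ℓ⟫).im) :
    ‖⟪x, ℓ⟫‖ ^ 2 ≤ 8 * (⟪x, y⟫).re * (⟪(v : H), At† v + ℓ⟫).im + 8 * ‖⟪(v : H), y⟫‖ ^ 2 := by
  have hform : ∀ μ : ℂ, 0 ≤ ‖μ‖ ^ 2 * (⟪x, A ⟨x, hxA⟩⟫).im +
      (conj μ * ⟪x, ℓ⟫ + μ * ⟪(v : H), A ⟨x, hxA⟩ - At ⟨x, hxAt⟩⟫).im +
      (⟪(v : H), At† v + ℓ⟫).im := fun μ => by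
    have hμxA : μ • x ∈ A.domain := A.domain.smul_mem μ hxA
    have hμxv : μ • x + v ∈ At†.domain := add_mem (hdual.1 hμxA) v.2
    rw [← im_inner_smul_add_eq hAt hdual hxA hxAt v ℓ μ hμxv]
    exact hdiss ⟨μ • x, hμxA⟩ hμxv
  have h := norm_sq_le_of_forall_im_nonneg hform
  rw [im_inner_eq_re_inner_of_sub_eq hAt hdual hxA hxAt hy, hy, inner_smul_right, norm_mul,
    norm_mul, norm_I, RCLike.norm_ofNat] at h
  linarith

end DualPair

theorem statement9_general
    (A At V : H →ₗ.[ℂ] H) (D : Submodule ℂ H)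
    (hAtdense : Dense (At.domain : Set H))
    (hdual : A ≤ At.adjoint)
    (hDA : D ≤ A.domain) (hDAt : D ≤ At.domain)
    (hVdom : V.domain = D)
    (hV : ∀ (x : H) (hxV : x ∈ V.domain) (hxA : x ∈ A.domain) (hxAt : x ∈ At.domain),
      V ⟨x, hxV⟩ = (2 * Complex.I)⁻¹ • (A ⟨x, hxA⟩ - At ⟨x, hxAt⟩))
    (𝓥 : Submodule ℂ H) (h𝓥 : 𝓥 ≤ At.adjoint.domain)
    (L : 𝓥 →ₗ[ℂ] H)
    (WF WK : H →ₗ.[ℂ] H)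
    (hWF : IsFriedrichsSqrt V WF) (hWK : IsKreinSqrt V WK)
    (h𝓥K : ∀ v : 𝓥, (v : H) ∈ WK.domain)
    (hdissext : (∀ (f : A.domain) (v : 𝓥) (hfv : (f : H) + (v : H) ∈ At.adjoint.domain),
      0 ≤ (⟪(f : H) + (v : H), At.adjoint ⟨(f : H) + (v : H), hfv⟩ + L v⟫).im)) :
    ∀ v : 𝓥, ∃ (g : H) (hg : g ∈ WF.domain), WF ⟨g, hg⟩ = L v := by
  obtain ⟨hWF_sa, -, ⟨T, hWT, -, -, hVT⟩, hWF_core⟩ := hWF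
  intro v
  set d := (⟪(v : H), At† ⟨v, h𝓥 v.2⟩ + L v⟫).im
  set M := ‖WK ⟨v, h𝓥K v⟩‖ ^ 2
  have hbound : ∀ x : (WF.domRestrict V.domain).domain,
      ‖⟪(L v : H), x⟫‖ ^ 2 ≤ 8 * (d + M) * ‖WF.domRestrict V.domain x‖ ^ 2 := by
    intro x₀
    set x : H := x₀.1
    have hxV : x ∈ V.domain := x₀.2.1
    have hxW : x ∈ WF.domain := x₀.2.2
    have hxD : x ∈ D := hVdom ▸ hxV
    have hVW : (⟪x, V ⟨x, hxV⟩⟫).re = ‖WF ⟨x, hxW⟩‖ ^ 2 := by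
      rw [(hVT.2 rfl : V ⟨x, hxV⟩ = T ⟨x, hVT.1 hxV⟩),
        hWT.inner_map_eq_norm_sq hWF_sa ⟨x, hVT.1 hxV⟩ hxW, ofReal_re]
    have hK := hWK.norm_inner_sq_le ⟨v, h𝓥K v⟩ ⟨x, hxV⟩ (hVW ▸ sq_nonneg _)
    have hAV : A ⟨x, hDA hxD⟩ - At ⟨x, hDAt hxD⟩ = (2 * I) • V ⟨x, hxV⟩ := by
      rw [hV x hxV (hDA hxD) (hDAt hxD), smul_inv_smul₀ (by simp)]
    have hdiss := norm_inner_sq_le_of_dissipative_extension hAtdense hdual (hDA hxD) (hDAt hxD)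
      hAV ⟨v, h𝓥 v.2⟩ (L v) (fun f => hdissext f v)
    rw [norm_inner_symm, LinearPMap.domRestrict_apply (y := ⟨x, hxW⟩) rfl, ← hVW]
    linarith
  refine hWF_sa.exists_apply_eq_of_norm_inner_le (C := √(8 * (d + M)))
    (LinearPMap.norm_inner_le_of_closure_eq hWF_core fun x => ?_)
  rw [← Real.sqrt_sq (norm_nonneg (WF.domRestrict V.domain x)), ← Real.sqrt_mul' _ (sq_nonneg _)]
  exact Real.le_sqrt_of_sq_le (hbound x)

/-- If `𝓥 ⊆ D(V_K^{1/2})` and `A_{𝓥,L}` is dissipative, then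
`L v ∈ ran(V_F^{1/2})` for all `v ∈ 𝓥`. -/
theorem statement9
    (A At V : H →ₗ.[ℂ] H) (D : Submodule ℂ H)
    (hAdense : Dense (A.domain : Set H)) (hAtdense : Dense (At.domain : Set H))
    (hAclosed : A.IsClosed) (hAtclosed : At.IsClosed)
    (hdual : A ≤ At.adjoint)
    (hDA : D ≤ A.domain) (hDAt : D ≤ At.domain)
    (hcoreA : (A.domRestrict D).closure = A)
    (hcoreAt : (At.domRestrict D).closure = At)
    (hdiss : Dissipative A)
    (hVdom : V.domain = D)
    (hV : ∀ (x : H) (hxV : x ∈ V.domain) (hxA : x ∈ A.domain) (hxAt : x ∈ At.domain),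
      V ⟨x, hxV⟩ = (2 * Complex.I)⁻¹ • (A ⟨x, hxA⟩ - At ⟨x, hxAt⟩))
    (𝓥 : Submodule ℂ H) (h𝓥 : 𝓥 ≤ At.adjoint.domain) (h𝓥A : 𝓥 ⊓ A.domain = ⊥)
    (L : 𝓥 →ₗ[ℂ] H)
    (WF WK : H →ₗ.[ℂ] H)
    (hWF : IsFriedrichsSqrt V WF) (hWK : IsKreinSqrt V WK)
    (h𝓥K : ∀ v : 𝓥, (v : H) ∈ WK.domain)
    (hdissext : (∀ (f : A.domain) (v : 𝓥) (hfv : (f : H) + (v : H) ∈ At.adjoint.domain),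
      0 ≤ (⟪(f : H) + (v : H), At.adjoint ⟨(f : H) + (v : H), hfv⟩ + L v⟫).im)) :
    ∀ v : 𝓥, ∃ (g : H) (hg : g ∈ WF.domain), WF ⟨g, hg⟩ = L v :=
  statement9_general A At V D hAtdense hdual hDA hDAt hVdom hV 𝓥 h𝓥 L WF WK hWF hWK h𝓥K hdissext
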